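/- A finite group G is nilpotent if and only if every irreducible constituent of (1_M)^G, as M ranges over all maximal subgroups of G, is linear (has degree 1). -/

import Mathlib

open scoped BigOperators Classical

/-- The character of a finite group induced from a function on a subgroup,
given by the usual induction formula. -/
noncomputable def indChar {G : Type} [Group G] (H : Subgroup G) (φ : H → ℂ) : G → ℂ :=
  fun g => (Nat.card H : ℂ)⁻¹ *
    ∑ᶠ x : G, if h : x * g * x⁻¹ ∈ H then φ (⟨x * g * x⁻¹, h⟩ : H) else 0

/-- The permutation character `(1_M)^G`. -/
noncomputable def permChar {G : Type} [Group G] (M : Subgroup G) : G → ℂ :=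
  indChar M (fun _ => 1)

/-- The usual inner product of class functions on a finite group. -/
noncomputable def charInner (G : Type) [Group G] (φ ψ : G → ℂ) : ℂ :=
  (Nat.card G : ℂ)⁻¹ * ∑ᶠ g : G, φ g * (starRingEnd ℂ) (ψ g)

/-- `χ` is an irreducible complex character of `G`. -/
def IsIrrChar (G : Type) [Group G] (χ : G → ℂ) : Prop :=
  ∃ V : FDRep ℂ G, CategoryTheory.Simple V ∧ FDRep.character V = χ

/-- `χ` is an irreducible constituent of the (virtual) character `ψ`. -/
def IsConstituent (G : Type) [Group G] (χ ψ : G → ℂ) : Prop :=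
  IsIrrChar G χ ∧ charInner G χ ψ ≠ 0

/-- A linear character of a subgroup: a multiplicative function to `ℂ` taking value `1` at `1`. -/
def IsLinearChar {G : Type} [Group G] (H : Subgroup G) (φ : H → ℂ) : Prop :=
  φ 1 = 1 ∧ ∀ a b : H, φ (a * b) = φ a * φ b

/-- A character is monomial if it is induced from a linear character of a subgroup. -/
def IsMonomial (G : Type) [Group G] (χ : G → ℂ) : Prop :=
  ∃ (H : Subgroup G) (φ : H → ℂ), IsLinearChar H φ ∧ χ = indChar H φ

/-- The kernel of a character, as a set. -/
def charKer (G : Type) [Group G] (χ : G → ℂ) : Set G := {g | χ g = χ 1}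

/-- `n` is a `π`-number: all its prime divisors lie in `π`. -/
def IsPiNumber (π : Set ℕ) (n : ℕ) : Prop := ∀ p : ℕ, p.Prime → p ∣ n → p ∈ π

/-- The largest normal `π'`-subgroup `O_{π'}(G)` (as the join of all normal `π'`-subgroups). -/
def Opi' (π : Set ℕ) (G : Type) [Group G] : Subgroup G :=
  ⨆ N ∈ {N : Subgroup G | N.Normal ∧ IsPiNumber πᶜ (Nat.card N)}, N

/-- `G` is `π`-separable: it has a normal series whose factors are `π`-groups or `π'`-groups. -/
def IsPiSeparable (π : Set ℕ) (G : Type) [Group G] : Prop :=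
  ∃ (n : ℕ) (H : Fin (n + 1) → Subgroup G),
    H 0 = ⊥ ∧ H (Fin.last n) = ⊤ ∧
    ∀ i : Fin n, H i.castSucc ≤ H i.succ ∧
      ((H i.castSucc).subgroupOf (H i.succ)).Normal ∧
      (IsPiNumber π (Nat.card (H i.succ ⧸ (H i.castSucc).subgroupOf (H i.succ))) ∨
       IsPiNumber πᶜ (Nat.card (H i.succ ⧸ (H i.castSucc).subgroupOf (H i.succ))))

/-- `G` is `π`-solvable: it has a normal series whose factors are `π'`-groups or solvable. -/
def IsPiSolvable (π : Set ℕ) (G : Type) [Group G] : Prop :=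
  ∃ (n : ℕ) (H : Fin (n + 1) → Subgroup G),
    H 0 = ⊥ ∧ H (Fin.last n) = ⊤ ∧
    ∀ i : Fin n, H i.castSucc ≤ H i.succ ∧
      ∃ hn : ((H i.castSucc).subgroupOf (H i.succ)).Normal,
      (IsPiNumber πᶜ (Nat.card (H i.succ ⧸ (H i.castSucc).subgroupOf (H i.succ))) ∨
       (letI := hn; IsSolvable (H i.succ ⧸ (H i.castSucc).subgroupOf (H i.succ))))

/-- The inertia subgroup `I_G(λ)` of a character of a normal subgroup. -/
def inertia {G : Type} [Group G] (N : Subgroup G) (hN : N.Normal) (lam : N → ℂ) :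
    Subgroup G where
  carrier := {g | ∀ n : N, lam ⟨g * n * g⁻¹, hN.conj_mem n n.2 g⟩ = lam n}
  one_mem' := by intro n; simp
  mul_mem' := by
    intro a b ha hb n
    have h1 := ha ⟨b * (n : G) * b⁻¹, hN.conj_mem n n.2 b⟩
    have h2 := hb n
    have e : (a * b) * (n : G) * (a * b)⁻¹ = a * (b * (n : G) * b⁻¹) * a⁻¹ := by group
    calc lam ⟨(a * b) * (n : G) * (a * b)⁻¹, hN.conj_mem n n.2 (a * b)⟩
        = lam ⟨a * (b * (n : G) * b⁻¹) * a⁻¹, by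
            rw [← e]; exact hN.conj_mem n n.2 (a * b)⟩ := by
          congr 1; exact Subtype.ext e
      _ = lam n := by rw [h1]; exact h2
  inv_mem' := by
    intro a ha n
    have h1 := ha ⟨a⁻¹ * (n : G) * a, by simpa using hN.conj_mem n n.2 a⁻¹⟩
    have e : a * (a⁻¹ * (n : G) * a) * a⁻¹ = (n : G) := by group
    have : lam ⟨(n : G), by rw [← e]; exact hN.conj_mem _ (by simpa using hN.conj_mem n n.2 a⁻¹) a⟩
        = lam ⟨a⁻¹ * (n : G) * a, by simpa using hN.conj_mem n n.2 a⁻¹⟩ := by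
      rw [← h1]; congr 1; exact Subtype.ext e.symm
    simpa using this.symm

/-- Conjugate of a character of a normal subgroup by a group element. -/
def conjChar {G : Type} [Group G] {N : Subgroup G} (hN : N.Normal) (g : G) (lam : N → ℂ) :
    N → ℂ :=
  fun n => lam ⟨g * (n : G) * g⁻¹, hN.conj_mem n n.2 g⟩

/-! By Frobenius reciprocity the irreducible constituents of `(1_M)^G` are the irreducible
representations with a nonzero `M`-fixed vector, and these are all linear exactly when `M`
contains the derived subgroup `G'`. If `G' ≤ M`, then `M` is normal, so in an irreducible
constituent the `M`-fixed vectors form a nonzero subrepresentation, hence everything, and the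
representation factors through the abelian group `G/M`. Conversely, by Maschke's theorem every
irreducible subrepresentation of the permutation module `ℂ[G/M]` has a nonzero `M`-fixed vector,
so if they are all linear then `G'` acts trivially on `ℂ[G/M]`, and in particular fixes the
coset `M`. Finally, a finite group is nilpotent iff its maximal subgroups are normal, and the
quotient of a nilpotent group by a normal maximal subgroup is simple and nilpotent, hence
abelian. -/

open CategoryTheory Module Representation

theorem MonoidHom.commutator_le_ker_of_commute {G M : Type*} [Group G] [Monoid M] (f : G →* M)
    (h : ∀ a b, Commute (f a) (f b)) : commutator G ≤ f.ker := by
  rw [commutator_def, Subgroup.commutator_le]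
  intro a _ b _
  rw [MonoidHom.mem_ker, commutatorElement_def, map_mul, map_mul, map_mul, (h a b).eq,
    mul_assoc (f b), ← map_mul, mul_inv_cancel, map_one, mul_one, ← map_mul, mul_inv_cancel,
    map_one]

theorem QuotientGroup.isSimpleGroup_of_isCoatom {G : Type*} [Group G] {M : Subgroup G} [M.Normal]
    (hM : IsCoatom M) : IsSimpleGroup (G ⧸ M) :=
  have := Set.isSimpleOrder_Ici_iff_isCoatom.mpr hM
  have e : Subgroup (G ⧸ M) ≃o Set.Ici M := QuotientGroup.comapMk'OrderIso M
  have := e.isSimpleOrder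
  { toNontrivial := Subgroup.nontrivial_iff.mp inferInstance
    eq_bot_or_eq_top_of_normal := fun H _ => eq_bot_or_eq_top H }

theorem Group.IsNilpotent.commutator_le_of_isCoatom {G : Type*} [Group G] [Finite G]
    [hG : Group.IsNilpotent G] {M : Subgroup G} (hM : IsCoatom M) : commutator G ≤ M := by
  have hnormal : ∀ H : Subgroup G, IsCoatom H → H.Normal :=
    (Group.isNilpotent_of_finite_tfae.out 0 2).mp hG
  have := hnormal M hM
  have := QuotientGroup.isSimpleGroup_of_isCoatom hM
  exact Subgroup.Normal.quotient_commutative_iff_commutator_le.mp inferInstance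

namespace Subrepresentation

variable {k G V : Type*} [AddCommGroup V] [Monoid G]

section Ring

variable [Ring k] [Module k V] {ρ : Representation k G V}

instance [IsArtinian k V] : WellFoundedLT (Subrepresentation ρ) :=
  StrictMono.wellFoundedLT (f := toSubmodule) fun _ _ h => h

def orderIsoIic (W : Subrepresentation ρ) :
    Subrepresentation W.toRepresentation ≃o Set.Iic W where
  toFun X := ⟨⟨X.toSubmodule.map W.toSubmodule.subtype, by
      rintro g _ ⟨x, hx, rfl⟩
      exact ⟨W.toRepresentation g x, X.apply_mem_toSubmodule g hx, rfl⟩⟩,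
    fun _ ⟨x, _, hx⟩ => hx ▸ x.2⟩
  invFun Y := ⟨Y.1.toSubmodule.comap W.toSubmodule.subtype,
    fun g _ hx => Y.1.apply_mem_toSubmodule g hx⟩
  left_inv X := Subrepresentation.ext
    (Submodule.comap_map_eq_of_injective W.toSubmodule.injective_subtype _)
  right_inv Y := Subtype.ext <| Subrepresentation.ext <|
    (Submodule.map_comap_subtype _ _).trans (inf_eq_right.mpr Y.2)
  map_rel_iff' := Submodule.map_le_map_iff_of_injective W.toSubmodule.injective_subtype _ _

theorem isCompl_toSubmodule {W W' : Subrepresentation ρ} (h : IsCompl W W') :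
    IsCompl W.toSubmodule W'.toSubmodule :=
  ⟨disjoint_iff.mpr (congrArg toSubmodule h.inf_eq_bot),
    codisjoint_iff.mpr (congrArg toSubmodule h.sup_eq_top)⟩

theorem projectionOnto_apply_map {W W' : Subrepresentation ρ} (h : IsCompl W W') (g : G) (v : V) :
    W.toSubmodule.projectionOnto W'.toSubmodule (isCompl_toSubmodule h) (ρ g v) =
      W.toRepresentation g
        (W.toSubmodule.projectionOnto W'.toSubmodule (isCompl_toSubmodule h) v) := by
  obtain ⟨a, ha, b, hb, rfl⟩ := Submodule.mem_sup.mp <|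
    (isCompl_toSubmodule h).sup_eq_top ▸ Submodule.mem_top (x := v)
  have hga : ρ g a ∈ W.toSubmodule := W.apply_mem_toSubmodule g ha
  have hgb : ρ g b ∈ W'.toSubmodule := W'.apply_mem_toSubmodule g hb
  simp only [map_add]
  rw [Submodule.projectionOnto_apply_left _ ⟨a, ha⟩,
    Submodule.projectionOnto_apply_left _ ⟨_, hga⟩,
    Submodule.projectionOnto_apply_right _ ⟨b, hb⟩,
    Submodule.projectionOnto_apply_right _ ⟨_, hgb⟩, map_zero, add_zero, add_zero]
  rfl

end Ring

theorem isIrreducible_toRepresentation [Field k] [Module k V] {ρ : Representation k G V}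
    {W : Subrepresentation ρ} (hW : IsAtom W) :
    W.toRepresentation.IsIrreducible :=
  have := Set.isSimpleOrder_Iic_iff_isAtom.mpr hW
  (orderIsoIic W).isSimpleOrder

end Subrepresentation

namespace Representation

variable {k G V : Type*} [Field k] [AddCommGroup V] [Module k V]

theorem IsIrreducible.of_comp_surjective {H : Type*} [Monoid G] [Monoid H]
    {σ : Representation k H V} {f : G →* H} (hf : Function.Surjective f)
    [IsIrreducible (σ.comp f)] : σ.IsIrreducible :=
  OrderIso.isSimpleOrder (β := Subrepresentation (σ.comp f))
    { toFun W := ⟨W.toSubmodule, fun g _ hv => W.apply_mem_toSubmodule (f g) hv⟩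
      invFun W := ⟨W.toSubmodule, fun h v hv => by
        obtain ⟨g, rfl⟩ := hf h
        exact W.apply_mem_toSubmodule g hv⟩
      left_inv _ := rfl
      right_inv _ := rfl
      map_rel_iff' := Iff.rfl }

variable [Group G]

noncomputable def invariantsSubrepresentation (ρ : Representation k G V) (S : Subgroup G)
    [S.Normal] : Subrepresentation ρ :=
  ⟨invariants (ρ.comp S.subtype), fun g _ hv => le_comap_invariants ρ S g hv⟩

theorem isTrivial_comp_of_invariantsSubrepresentation_eq_top {ρ : Representation k G V}
    {S : Subgroup G} [S.Normal] (h : invariantsSubrepresentation ρ S = ⊤) :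
    IsTrivial (ρ.comp S.subtype) :=
  ⟨fun s => LinearMap.ext fun v =>
    (h ▸ Submodule.mem_top : v ∈ (invariantsSubrepresentation ρ S).toSubmodule) s⟩

theorem IsIrreducible.isTrivial_comp_of_invariants_ne_bot (ρ : Representation k G V)
    [ρ.IsIrreducible] (S : Subgroup G) [S.Normal] (h : invariants (ρ.comp S.subtype) ≠ ⊥) :
    IsTrivial (ρ.comp S.subtype) :=
  isTrivial_comp_of_invariantsSubrepresentation_eq_top <|
    (eq_bot_or_eq_top _).resolve_left fun h' => h (congrArg Subrepresentation.toSubmodule h')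

theorem IsIrreducible.finrank_eq_one_of_commutator_le [IsAlgClosed k] [FiniteDimensional k V]
    (ρ : Representation k G V) [ρ.IsIrreducible] (S : Subgroup G) [S.Normal]
    [IsTrivial (ρ.comp S.subtype)] (hS : commutator G ≤ S) : finrank k V = 1 := by
  have := Subgroup.Normal.quotient_commutative_iff_commutator_le.mpr hS
  have : IsIrreducible ((ofQuotient ρ S).comp (QuotientGroup.mk' S)) := ‹ρ.IsIrreducible›
  have := IsIrreducible.of_comp_surjective (QuotientGroup.mk'_surjective S)
    (σ := ofQuotient ρ S)
  exact IsIrreducible.finrank_eq_one_of_isMulCommutative (ofQuotient ρ S)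

theorem isTrivial_comp_commutator_of_finrank_eq_one (ρ : Representation k G V)
    (h : finrank k V = 1) : IsTrivial (ρ.comp (commutator G).subtype) := by
  have hcomm : ∀ a b, Commute (ρ a) (ρ b) := fun a b => by
    obtain ⟨c, hc, -⟩ := (ρ a).existsUnique_eq_smul_id_of_finrank_eq_one h
    rw [hc]
    exact (Commute.one_left _).smul_left c
  exact ⟨fun g => ρ.commutator_le_ker_of_commute hcomm g.2⟩

theorem isTrivial_comp_commutator_of_forall_isAtom [FiniteDimensional k V]
    (ρ : Representation k G V) [IsSemisimpleRepresentation ρ]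
    (h : ∀ W : Subrepresentation ρ, IsAtom W → finrank k W.toSubmodule = 1) :
    IsTrivial (ρ.comp (commutator G).subtype) := by
  -- An atom in a complement of the `G'`-fixed vectors would be one-dimensional, hence `G'`-fixed.
  set F := invariantsSubrepresentation ρ (commutator G)
  refine isTrivial_comp_of_invariantsSubrepresentation_eq_top (S := commutator G) ?_
  obtain ⟨F', hF'⟩ := exists_isCompl F
  obtain hbot | ⟨A, hA, hAF'⟩ := eq_bot_or_exists_atom_le F'
  · exact eq_top_of_isCompl_bot (hbot ▸ hF')
  · have := isTrivial_comp_commutator_of_finrank_eq_one A.toRepresentation (h A hA)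
    have hAF : A ≤ F := fun v hv c => congrArg Subtype.val <|
      isTrivial_apply (A.toRepresentation.comp (commutator G).subtype) c
        (⟨v, hv⟩ : A.toSubmodule)
    exact (hA.1 ((hF'.disjoint.mono_left hAF).eq_bot_of_le hAF')).elim

theorem invariants_ofMulAction_quotient_ne_bot [Finite G] [NeZero (Nat.card G : k)]
    (M : Subgroup G) {W : Subrepresentation (ofMulAction k G (G ⧸ M))} (hW : W ≠ ⊥) :
    invariants (W.toRepresentation.comp M.subtype) ≠ ⊥ := by
  obtain ⟨W', hW'⟩ := exists_isCompl W
  set π := W.toSubmodule.projectionOnto W'.toSubmodule (Subrepresentation.isCompl_toSubmodule hW')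
  -- `v₀`, the projection of the point mass at the coset `M`, is `M`-fixed by equivariance, and
  -- nonzero because its translates are the projections of all point masses.
  set v₀ := π (.single ((1 : G) : G ⧸ M) 1)
  have hπ (g : G) : π (.single (g : G ⧸ M) 1) = W.toRepresentation g v₀ := by
    rw [← Subrepresentation.projectionOnto_apply_map hW', ofMulAction_single,
      MulAction.Quotient.smul_mk, smul_eq_mul, mul_one]
  refine (Submodule.ne_bot_iff _).mpr ⟨v₀, fun m => ?_, fun hv₀ => hW ?_⟩
  · have hm : ((m : G) : G ⧸ M) = ((1 : G) : G ⧸ M) := QuotientGroup.eq.mpr (by simp)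
    rw [MonoidHom.comp_apply, Subgroup.coe_subtype, ← hπ, hm]
  · have hπ0 (x) : π x = 0 := by
      induction x using MonoidAlgebra.induction_linear with
      | zero => exact map_zero π
      | add x y hx hy => rw [map_add, hx, hy, add_zero]
      | single q r =>
        induction q using QuotientGroup.induction_on with
        | H g => rw [← mul_one r, ← MonoidAlgebra.smul_single', map_smul, hπ, hv₀, map_zero,
            smul_zero]
    refine Subrepresentation.toSubmodule_injective (eq_bot_iff.mpr fun w hw => ?_)
    have hπw : π w = ⟨w, hw⟩ := Submodule.projectionOnto_apply_left _ ⟨w, hw⟩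
    exact (congrArg Subtype.val hπw).symm.trans (congrArg Subtype.val (hπ0 w))

variable (k) in
theorem le_of_isTrivial_comp_ofMulAction_quotient {S M : Subgroup G}
    [IsTrivial ((ofMulAction k G (G ⧸ M)).comp S.subtype)] : S ≤ M := by
  intro s hs
  have hfix := isTrivial_apply ((ofMulAction k G (G ⧸ M)).comp S.subtype) ⟨s, hs⟩
    (.single ((1 : G) : G ⧸ M) (1 : k))
  rw [MonoidHom.comp_apply, Subgroup.coe_subtype, ofMulAction_single,
    MonoidAlgebra.single_left_inj one_ne_zero, MulAction.Quotient.smul_mk, smul_eq_mul,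
    mul_one] at hfix
  simpa using QuotientGroup.eq.mp hfix

end Representation

namespace FDRep

variable {k G : Type} [Field k] [Group G]

def subrepresentationι (V : FDRep k G) (W : Subrepresentation V.ρ) :
    FDRep.of W.toRepresentation ⟶ V :=
  ⟨FGModuleCat.ofHom W.toSubmodule.subtype, fun _ => rfl⟩

instance (V : FDRep k G) (W : Subrepresentation V.ρ) : Mono (V.subrepresentationι W) :=
  ConcreteCategory.mono_of_injective _ W.toSubmodule.injective_subtype

theorem isIrreducible_of_simple (V : FDRep k G) [Simple V] : IsIrreducible V.ρ where
  exists_pair_ne := ⟨⊥, ⊤, fun h => id_nonzero V <| by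
    ext v
    exact (show v ∈ (⊥ : Subrepresentation V.ρ) from h ▸ Submodule.mem_top)⟩
  eq_bot_or_eq_top W := by
    refine or_iff_not_imp_left.mpr fun hW => ?_
    obtain ⟨w, hw, hw0⟩ := Submodule.exists_mem_ne_zero_of_ne_bot
      fun h => hW (Subrepresentation.toSubmodule_injective h)
    have : IsIso (V.subrepresentationι W) := isIso_of_mono_of_nonzero fun h =>
      hw0 (congrArg (fun f : FDRep.of W.toRepresentation ⟶ V =>
        f.hom.hom.hom (⟨w, hw⟩ : W.toSubmodule)) h)
    refine Subrepresentation.toSubmodule_injective (eq_top_iff.mpr fun v _ => ?_)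
    obtain ⟨x, rfl⟩ := (ConcreteCategory.bijective_of_isIso (V.subrepresentationι W)).2 v
    exact x.2

theorem simple_of_isIrreducible [Fintype G] [IsAlgClosed k] [CharZero k] {V : Type}
    [AddCommGroup V] [Module k V] [FiniteDimensional k V] (ρ : Representation k G V)
    [ρ.IsIrreducible] : Simple (FDRep.of ρ) := by
  have : Invertible (Nat.card G : k) := invertibleOfNonzero (NeZero.ne _)
  have h := Representation.char_orthonormal ρ ρ
  rw [if_pos ⟨Representation.Equiv.refl ρ⟩, inv_mul_eq_one₀ (NeZero.ne _)] at h
  exact (simple_iff_char_is_norm_one _).mpr h.symm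

end FDRep

section PermutationCharacter

variable {G : Type} [Group G]

theorem permChar_apply [Fintype G] (M : Subgroup G) (g : G) :
    permChar M g = (Nat.card M : ℂ)⁻¹ * ∑ x : G, if x * g * x⁻¹ ∈ M then 1 else 0 := by
  simp [permChar, indChar, finsum_eq_sum_of_fintype]

theorem conj_permChar [Fintype G] (M : Subgroup G) (g : G) :
    starRingEnd ℂ (permChar M g) = permChar M g := by
  simp [permChar_apply]

theorem sum_character_mul_ite_conj_mem [Fintype G] (V : FDRep ℂ G) (M : Subgroup G) [Fintype M]
    (x : G) : ∑ g : G, V.character g * (if x * g * x⁻¹ ∈ M then 1 else 0) =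
      ∑ m : M, V.character m := by
  calc ∑ g : G, V.character g * (if x * g * x⁻¹ ∈ M then 1 else 0)
      = ∑ y : G, if y ∈ M then V.character y else 0 :=
        Fintype.sum_equiv (MulAut.conj x).toEquiv _ _ fun g => by simp [FDRep.char_conj]
    _ = ∑ m : M, V.character m := by
        rw [← Finset.sum_filter]
        exact Finset.sum_subtype _ (by simp) _

variable [Finite G]

theorem charInner_character_permChar (V : FDRep ℂ G) (M : Subgroup G) :
    charInner G V.character (permChar M) = finrank ℂ (invariants (V.ρ.comp M.subtype)) := by
  have := Fintype.ofFinite G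
  have := Fintype.ofFinite M
  have : Invertible (Nat.card M : ℂ) := invertibleOfNonzero (NeZero.ne _)
  calc charInner G V.character (permChar M)
      = (Nat.card G : ℂ)⁻¹ * ((Nat.card M : ℂ)⁻¹ *
          ∑ x : G, ∑ g : G, V.character g * (if x * g * x⁻¹ ∈ M then 1 else 0)) := by
        simp only [charInner, finsum_eq_sum_of_fintype, conj_permChar]
        conv_rhs => rw [Finset.sum_comm, Finset.mul_sum]
        refine congrArg _ (Finset.sum_congr rfl fun g _ => ?_)
        rw [permChar_apply, mul_left_comm, Finset.mul_sum]
    _ = (Nat.card M : ℂ)⁻¹ * ∑ m : M, V.character m := by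
        simp only [sum_character_mul_ite_conj_mem, Finset.sum_const, Finset.card_univ,
          nsmul_eq_mul, Nat.card_eq_fintype_card]
        field_simp
    _ = _ := FDRep.average_char_eq_finrank_invariants (FDRep.of (V.ρ.comp M.subtype))

theorem isConstituent_permChar_iff (M : Subgroup G) (χ : G → ℂ) :
    IsConstituent G χ (permChar M) ↔
      ∃ V : FDRep ℂ G, Simple V ∧ V.character = χ ∧
        invariants (V.ρ.comp M.subtype) ≠ ⊥ := by
  constructor
  · rintro ⟨⟨V, hV, rfl⟩, h⟩
    refine ⟨V, hV, rfl, fun hbot => h ?_⟩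
    rw [charInner_character_permChar, hbot, finrank_bot, Nat.cast_zero]
  · rintro ⟨V, hV, rfl, h⟩
    refine ⟨⟨V, hV, rfl⟩, ?_⟩
    rw [charInner_character_permChar, Nat.cast_ne_zero]
    exact Submodule.finrank_eq_zero.not.mpr h

theorem isConstituent_permChar_linear_of_commutator_le {M : Subgroup G}
    (hM : commutator G ≤ M) {χ : G → ℂ} (hχ : IsConstituent G χ (permChar M)) :
    χ 1 = 1 := by
  have := Subgroup.Normal.of_commutator_le G hM
  obtain ⟨V, hV, rfl, hinv⟩ := (isConstituent_permChar_iff M χ).mp hχ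
  have := FDRep.isIrreducible_of_simple V
  have := IsIrreducible.isTrivial_comp_of_invariants_ne_bot V.ρ M hinv
  rw [FDRep.char_one, IsIrreducible.finrank_eq_one_of_commutator_le V.ρ M hM, Nat.cast_one]

theorem commutator_le_of_forall_isConstituent_permChar_linear {M : Subgroup G}
    (h : ∀ χ, IsConstituent G χ (permChar M) → χ 1 = 1) : commutator G ≤ M := by
  have := Fintype.ofFinite G
  have : IsTrivial ((ofMulAction ℂ G (G ⧸ M)).comp (commutator G).subtype) :=
    isTrivial_comp_commutator_of_forall_isAtom _ fun W hW => by
      have := Subrepresentation.isIrreducible_toRepresentation hW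
      have hχ := h _ <| (isConstituent_permChar_iff M _).mpr
        ⟨FDRep.of W.toRepresentation, FDRep.simple_of_isIrreducible _, rfl,
          invariants_ofMulAction_quotient_ne_bot M hW.1⟩
      rwa [FDRep.char_one, Nat.cast_eq_one] at hχ
  exact le_of_isTrivial_comp_ofMulAction_quotient ℂ

theorem forall_isConstituent_permChar_linear_iff (M : Subgroup G) :
    (∀ χ, IsConstituent G χ (permChar M) → χ 1 = 1) ↔ commutator G ≤ M :=
  ⟨commutator_le_of_forall_isConstituent_permChar_linear,
    fun hM _ => isConstituent_permChar_linear_of_commutator_le hM⟩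

end PermutationCharacter

/-- A finite group `G` is nilpotent if and only if every irreducible constituent of
`(1_M)^G`, as `M` ranges over all maximal subgroups of `G`, is linear. -/
theorem stmt16 {G : Type} [Group G] [Finite G] :
    Group.IsNilpotent G ↔
      ∀ M : Subgroup G, IsCoatom M →
        ∀ χ : G → ℂ, IsConstituent G χ (permChar M) → χ 1 = 1 := by
  simp only [forall_isConstituent_permChar_linear_iff]
  refine ⟨fun _ M hM => Group.IsNilpotent.commutator_le_of_isCoatom hM, fun h => ?_⟩
  exact (Group.isNilpotent_of_finite_tfae.out 0 2).mpr fun M hM =>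
    Subgroup.Normal.of_commutator_le G (h M hM)
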